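/- Let M = [[x_0,y_1,y_0,2,2,1],[y_1,x_1,1,2,1,2],[y_0,1,x_2,1,2,2],[2,2,1,x_3,2,1],[2,1,2,2,x_4,1],[1,2,2,1,1,x_5]] over ℤ[x_0,…,x_5,y_0,y_1]. Then det of the submatrix with rows {2,3,4} and columns {1,2,5} equals 5 - x_2, det with rows {2,4,5} and columns {1,2,3} equals 3x_2 - 4, and det with rows {0,1,2} and columns {3,4,5} equals -5; consequently the ideal generated by all 3×3 minors of M is the unit ideal. -/

import Mathlib

open MvPolynomial

def Matrix.minorIdeal {m n R : Type*} [CommRing R] (k : ℕ) (M : Matrix m n R) : Ideal R :=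
  Ideal.span {p | ∃ (r : Fin k → m) (c : Fin k → n),
    Function.Injective r ∧ Function.Injective c ∧ p = (M.submatrix r c).det}

theorem Matrix.det_submatrix_mem_minorIdeal {m n R : Type*} [CommRing R] {k : ℕ}
    (M : Matrix m n R) {r : Fin k → m} {c : Fin k → n}
    (hr : Function.Injective r) (hc : Function.Injective c) :
    (M.submatrix r c).det ∈ M.minorIdeal k :=
  Ideal.subset_span ⟨r, c, hr, hc, rfl⟩

theorem Ideal.eq_top_of_five_sub_mem_of_three_mul_sub_four_mem {R : Type*} [CommRing R] {I : Ideal R} {t : R}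
    (h₁ : 5 - t ∈ I) (h₂ : 3 * t - 4 ∈ I) (h₃ : -5 ∈ I) : I = ⊤ := by
  rw [I.eq_top_iff_one]
  have h : (1 : R) = 3 * (5 - t) + (3 * t - 4) + 2 * -5 := by ring
  rw [h]
  exact add_mem (add_mem (I.mul_mem_left _ h₁) h₂) (I.mul_mem_left _ h₃)

/-- The variables `X 6`, `X 7` play the roles of `y 0`, `y 1`. -/
noncomputable def panMatrix : Matrix (Fin 6) (Fin 6) (MvPolynomial (Fin 8) ℤ) :=
  !![X 0, X 7, X 6, 2, 2, 1;
     X 7, X 1, 1, 2, 1, 2;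
     X 6, 1, X 2, 1, 2, 2;
     2, 2, 1, X 3, 2, 1;
     2, 1, 2, 2, X 4, 1;
     1, 2, 2, 1, 1, X 5]

theorem panMatrix_det_submatrix_234_125 :
    (panMatrix.submatrix ![2, 3, 4] ![1, 2, 5]).det = 5 - X 2 := by
  rw [Matrix.det_fin_three]
  simp only [panMatrix, Matrix.submatrix_apply, Matrix.of_apply, Matrix.cons_val',
    Matrix.cons_val, Matrix.cons_val_zero, Matrix.cons_val_one, Matrix.cons_val_fin_one]
  ring

theorem panMatrix_det_submatrix_245_123 :
    (panMatrix.submatrix ![2, 4, 5] ![1, 2, 3]).det = 3 * X 2 - 4 := by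
  rw [Matrix.det_fin_three]
  simp only [panMatrix, Matrix.submatrix_apply, Matrix.of_apply, Matrix.cons_val',
    Matrix.cons_val, Matrix.cons_val_zero, Matrix.cons_val_one, Matrix.cons_val_fin_one]
  ring

theorem panMatrix_det_submatrix_012_345 :
    (panMatrix.submatrix ![0, 1, 2] ![3, 4, 5]).det = -5 := by
  rw [Matrix.det_fin_three]
  simp only [panMatrix, Matrix.submatrix_apply, Matrix.of_apply, Matrix.cons_val',
    Matrix.cons_val, Matrix.cons_val_zero, Matrix.cons_val_one, Matrix.cons_val_fin_one]
  norm_num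

theorem stmt_6 :
    letI x : Fin 6 → MvPolynomial (Fin 8) ℤ := fun i => X ⟨i, by omega⟩
    letI y : Fin 2 → MvPolynomial (Fin 8) ℤ := fun i => X ⟨6 + i, by omega⟩
    letI M : Matrix (Fin 6) (Fin 6) (MvPolynomial (Fin 8) ℤ) :=
      !![x 0, y 1, y 0, 2, 2, 1;
         y 1, x 1, 1, 2, 1, 2;
         y 0, 1, x 2, 1, 2, 2;
         2, 2, 1, x 3, 2, 1;
         2, 1, 2, 2, x 4, 1;
         1, 2, 2, 1, 1, x 5]
    (M.submatrix (![2, 3, 4] : Fin 3 → Fin 6) (![1, 2, 5] : Fin 3 → Fin 6)).det = 5 - x 2 ∧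
    (M.submatrix (![2, 4, 5] : Fin 3 → Fin 6) (![1, 2, 3] : Fin 3 → Fin 6)).det = 3 * x 2 - 4 ∧
    (M.submatrix (![0, 1, 2] : Fin 3 → Fin 6) (![3, 4, 5] : Fin 3 → Fin 6)).det = -5 ∧
    Ideal.span {p : MvPolynomial (Fin 8) ℤ | ∃ (r c : Fin 3 → Fin 6),
      Function.Injective r ∧ Function.Injective c ∧ p = (M.submatrix r c).det} = ⊤ := by
  show (panMatrix.submatrix ![2, 3, 4] ![1, 2, 5]).det = 5 - X 2 ∧
    (panMatrix.submatrix ![2, 4, 5] ![1, 2, 3]).det = 3 * X 2 - 4 ∧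
    (panMatrix.submatrix ![0, 1, 2] ![3, 4, 5]).det = -5 ∧ panMatrix.minorIdeal 3 = ⊤
  refine ⟨panMatrix_det_submatrix_234_125, panMatrix_det_submatrix_245_123,
    panMatrix_det_submatrix_012_345,
    Ideal.eq_top_of_five_sub_mem_of_three_mul_sub_four_mem (t := X 2) ?_ ?_ ?_⟩
  · rw [← panMatrix_det_submatrix_234_125]
    exact panMatrix.det_submatrix_mem_minorIdeal (by decide) (by decide)
  · rw [← panMatrix_det_submatrix_245_123]
    exact panMatrix.det_submatrix_mem_minorIdeal (by decide) (by decide)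
  · rw [← panMatrix_det_submatrix_012_345]
    exact panMatrix.det_submatrix_mem_minorIdeal (by decide) (by decide)
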